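/- Every element x of the graph group G_F is the join (with respect to the lattice order ≤) of all peaks p with p ≤ x. -/

import Mathlib

/-!
Induct on `|x|`, showing that every upper bound `w` of the peaks below `x` lies above `x`.
If `x ≠ 1` is not a peak, it has two maximal symbols `α ≠ β`, and by induction `xα⁻¹ ≤ w` and
`xβ⁻¹ ≤ w`. With `y = x⁻¹w` this says `|w| = |x| - 1 + |αy| = |x| - 1 + |βy|`, so `x ≤ w` unless
`|αy| = |βy| = |y| - 1`. In that case the exchange property of graph groups (two distinct maximal
symbols can be split off together) gives `x = u⁻¹βα` and `y = α⁻¹β⁻¹v` with `|u| ≤ |x| - 2` and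
`|v| ≤ |y| - 2`, hence `|w| = |u⁻¹v| ≤ |x| + |y| - 4`, a contradiction.

The exchange property rests on the solution of the word problem: shortest words for the same
element differ only by swaps of adjacent commuting symbols. This is van der Waerden's trick:
`G_F` acts on swap classes of reduced words, a symbol cancelling against the word when its
inverse can be moved to the front and being prepended otherwise. The class reached from the
empty word is a normal form of length `|x|`.
-/

open Pointwise

namespace GraphGroupPaper

/-- The set of commutator relators: `gᵢ` and `gⱼ` commute for every pair of distinct
`i, j` with `{i,j} ∉ F`. -/
def Rels (k : ℕ) (F : Set (Sym2 (Fin k))) : Set (FreeGroup (Fin k)) :=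
  {w | ∃ i j : Fin k, i ≠ j ∧ s(i, j) ∉ F ∧
      w = FreeGroup.of i * FreeGroup.of j * (FreeGroup.of i)⁻¹ * (FreeGroup.of j)⁻¹}

/-- The graph group `G_F` with generators `g₁, …, g_k` and relations `gᵢgⱼ = gⱼgᵢ`
for all distinct `i, j` with `{i,j} ∉ F`. -/
abbrev Grp (k : ℕ) (F : Set (Sym2 (Fin k))) := PresentedGroup (Rels k F)

/-- The generator `gᵢ` of the graph group. -/
def gen (k : ℕ) (F : Set (Sym2 (Fin k))) (i : Fin k) : Grp k F :=
  PresentedGroup.of i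

/-- The group element corresponding to a symbol: `(i, true)` stands for `gᵢ`,
`(i, false)` stands for `gᵢ⁻¹`. -/
def sym (k : ℕ) (F : Set (Sym2 (Fin k))) (α : Fin k × Bool) : Grp k F :=
  if α.2 then gen k F α.1 else (gen k F α.1)⁻¹

/-- The product of the word `l` of symbols, as an element of the graph group. -/
def wordProd (k : ℕ) (F : Set (Sym2 (Fin k))) (l : List (Fin k × Bool)) : Grp k F :=
  (l.map (sym k F)).prod

/-- `|x|` : the length of a shortest word in the symbols representing `x`. -/
noncomputable def len {k : ℕ} {F : Set (Sym2 (Fin k))} (x : Grp k F) : ℕ :=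
  sInf {n | ∃ l : List (Fin k × Bool), wordProd k F l = x ∧ l.length = n}

/-- The partial order on `G_F`:  `x ≤ y` iff `|y| = |x| + |x⁻¹y|`. -/
def le {k : ℕ} {F : Set (Sym2 (Fin k))} (x y : Grp k F) : Prop :=
  len y = len x + len (x⁻¹ * y)

/-- `m` is the meet `x ∧ y` (greatest lower bound w.r.t. `le`). -/
def IsMeet {k : ℕ} {F : Set (Sym2 (Fin k))} (x y m : Grp k F) : Prop :=
  le m x ∧ le m y ∧ ∀ w, le w x → le w y → le w m

/-- `j` is the (finite) join `x ∨ y` (least upper bound w.r.t. `le`);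
`x ∨ y` is finite iff such a `j` exists. -/
def IsJoin {k : ℕ} {F : Set (Sym2 (Fin k))} (x y j : Grp k F) : Prop :=
  le x j ∧ le y j ∧ ∀ w, le x w → le y w → le j w

/-- `j` is the (finite) join of the set `S`. -/
def IsJoinSet {k : ℕ} {F : Set (Sym2 (Fin k))} (S : Set (Grp k F)) (j : Grp k F) : Prop :=
  (∀ s ∈ S, le s j) ∧ ∀ w, (∀ s ∈ S, le s w) → le j w

/-- `y` is a segment of `a` if `a = x·y·z` for some `x, z`. -/
def Segment {k : ℕ} {F : Set (Sym2 (Fin k))} (y a : Grp k F) : Prop :=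
  ∃ x z, a = x * y * z ∧ len a = len x + len y + len z

/-- The left-invariant metric `dist(x,y) = |x⁻¹y|`. -/
noncomputable def dist {k : ℕ} {F : Set (Sym2 (Fin k))} (x y : Grp k F) : ℕ :=
  len (x⁻¹ * y)

/-- A nonempty set `L` is convex if `x, z ∈ L` and `dist(x,y) + dist(y,z) = dist(x,z)`
imply `y ∈ L`. -/
def ConvexSet {k : ℕ} {F : Set (Sym2 (Fin k))} (L : Set (Grp k F)) : Prop :=
  L.Nonempty ∧ ∀ x z y : Grp k F, x ∈ L → z ∈ L →
    dist x y + dist y z = dist x z → y ∈ L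

/-- An ideal: nonempty, downward closed, and closed under finite joins. -/
def IdealSet {k : ℕ} {F : Set (Sym2 (Fin k))} (I : Set (Grp k F)) : Prop :=
  I.Nonempty ∧ (∀ x ∈ I, ∀ y, le y x → y ∈ I) ∧
    (∀ x ∈ I, ∀ y ∈ I, ∀ j, IsJoin x y j → j ∈ I)

/-- `H` is closed if both `H` and `H⁻¹` are ideals. -/
def ClosedSet {k : ℕ} {F : Set (Sym2 (Fin k))} (H : Set (Grp k F)) : Prop :=
  IdealSet H ∧ IdealSet H⁻¹

/-- `m` is a minimal element of `S` w.r.t. `le`. -/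
def MinimalIn {k : ℕ} {F : Set (Sym2 (Fin k))} (S : Set (Grp k F)) (m : Grp k F) : Prop :=
  m ∈ S ∧ ∀ x ∈ S, le x m → x = m

/-- `l` is a reduced (i.e. shortest) word representing `x`. -/
def MinWord {k : ℕ} {F : Set (Sym2 (Fin k))} (x : Grp k F) (l : List (Fin k × Bool)) : Prop :=
  wordProd k F l = x ∧ l.length = len x

open Classical in
/-- `#_α(x)`: the number of occurrences of the symbol `α` (not counting `α⁻¹`)
in a reduced word representing `x`. -/
noncomputable def symCount {k : ℕ} {F : Set (Sym2 (Fin k))} (α : Fin k × Bool)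
    (x : Grp k F) : ℕ :=
  if h : ∃ l, MinWord x l then h.choose.count α else 0

/-- The symbol `α` occurs in `x`. -/
def Occurs {k : ℕ} {F : Set (Sym2 (Fin k))} (α : Fin k × Bool) (x : Grp k F) : Prop :=
  0 < symCount α x

/-- `α` is a maximal symbol of `x`, i.e. `xα⁻¹ ≤ x`. -/
def MaxSym {k : ℕ} {F : Set (Sym2 (Fin k))} (α : Fin k × Bool) (x : Grp k F) : Prop :=
  le (x * (sym k F α)⁻¹) x

/-- A peak: an element with precisely one maximal symbol. -/
def IsPeak {k : ℕ} {F : Set (Sym2 (Fin k))} (p : Grp k F) : Prop :=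
  ∃! α : Fin k × Bool, MaxSym α p

/-- An `α`-peak: a peak whose unique maximal symbol is `α`. -/
def AlphaPeak {k : ℕ} {F : Set (Sym2 (Fin k))} (α : Fin k × Bool) (p : Grp k F) : Prop :=
  MaxSym α p ∧ ∀ β, MaxSym β p → β = α

/-- The set of generator indices occurring in `b`. -/
def Support {k : ℕ} {F : Set (Sym2 (Fin k))} (b : Grp k F) : Set (Fin k) :=
  {i | Occurs (i, true) b ∨ Occurs (i, false) b}

/-- `b` is connected: the generators occurring in `b` induce a connected subgraph of
the graph `([k], F)`. -/
def Conn {k : ℕ} {F : Set (Sym2 (Fin k))} (b : Grp k F) : Prop :=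
  (SimpleGraph.induce (Support b) (SimpleGraph.fromEdgeSet F)).Connected

/-- `b` is cyclically reduced: `b ∧ b⁻¹ = 1`. -/
def CycRed {k : ℕ} {F : Set (Sym2 (Fin k))} (b : Grp k F) : Prop :=
  IsMeet b b⁻¹ 1

section

variable {k : ℕ} {F : Set (Sym2 (Fin k))}

abbrev Letter (k : ℕ) := Fin k × Bool

abbrev Word (k : ℕ) := List (Letter k)

namespace Letter

def inv (a : Letter k) : Letter k := (a.1, !a.2)

@[simp] protected lemma inv_inv (a : Letter k) : a.inv.inv = a := by
  simp [inv]

def Commutes (F : Set (Sym2 (Fin k))) (a b : Letter k) : Prop :=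
  a.1 ≠ b.1 ∧ s(a.1, b.1) ∉ F

variable {a b : Letter k}

lemma Commutes.symm (h : Commutes F a b) : Commutes F b a :=
  ⟨h.1.symm, by rw [Sym2.eq_swap]; exact h.2⟩

lemma Commutes.inv_left (h : Commutes F a b) : Commutes F a.inv b := h

lemma Commutes.inv_right (h : Commutes F a b) : Commutes F a b.inv := h

lemma Commutes.ne (h : Commutes F a b) : a ≠ b := fun hab => h.1 (congrArg Prod.fst hab)

end Letter

open Letter

inductive Swap (F : Set (Sym2 (Fin k))) : Word k → Word k → Prop
  | swap (p q : Word k) (a b : Letter k) (h : Commutes F a b) :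
      Swap F (p ++ a :: b :: q) (p ++ b :: a :: q)

def TraceEqv (F : Set (Sym2 (Fin k))) : Word k → Word k → Prop :=
  Relation.ReflTransGen (Swap F)

namespace TraceEqv

variable {l l₁ l₂ l₃ m p q : Word k} {a : Letter k}

lemma refl (l : Word k) : TraceEqv F l l := Relation.ReflTransGen.refl

lemma trans (h : TraceEqv F l₁ l₂) (h' : TraceEqv F l₂ l₃) : TraceEqv F l₁ l₃ :=
  Relation.ReflTransGen.trans h h'

lemma single (h : Swap F l₁ l₂) : TraceEqv F l₁ l₂ := Relation.ReflTransGen.single h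

lemma swap (p q : Word k) {a b : Letter k} (h : Commutes F a b) :
    TraceEqv F (p ++ a :: b :: q) (p ++ b :: a :: q) :=
  single (.swap p q a b h)

lemma swap_cons {a b : Letter k} (h : Commutes F a b) (q : Word k) :
    TraceEqv F (a :: b :: q) (b :: a :: q) :=
  swap [] q h

lemma symm (h : TraceEqv F l₁ l₂) : TraceEqv F l₂ l₁ := by
  induction h with
  | refl => exact refl _
  | tail _ hs ih =>
    obtain ⟨p, q, a, b, hab⟩ := hs
    exact (swap p q hab.symm).trans ih

lemma length_eq (h : TraceEqv F l₁ l₂) : l₁.length = l₂.length := by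
  induction h with
  | refl => rfl
  | tail _ hs ih => obtain ⟨p, q, a, b, -⟩ := hs; simpa using ih

lemma append_left (p : Word k) (h : TraceEqv F l₁ l₂) : TraceEqv F (p ++ l₁) (p ++ l₂) := by
  induction h with
  | refl => exact refl _
  | tail _ hs ih =>
    obtain ⟨p', q, a, b, hab⟩ := hs
    exact ih.trans (by simpa using swap (p ++ p') q hab)

lemma cons (a : Letter k) (h : TraceEqv F l₁ l₂) : TraceEqv F (a :: l₁) (a :: l₂) :=
  append_left [a] h

lemma append_cons_of_forall_commutes (hp : ∀ b ∈ p, Commutes F a b) (q : Word k) :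
    TraceEqv F (p ++ a :: q) (a :: (p ++ q)) := by
  induction p with
  | nil => exact refl _
  | cons c p ih =>
    have hpq := (ih fun b hb => hp b (List.mem_cons_of_mem c hb)).cons c
    exact hpq.trans (swap_cons (hp c List.mem_cons_self).symm _)

end TraceEqv

lemma Swap.exists_append_cons {a : Letter k} {p q l : Word k}
    (hp : ∀ b ∈ p, Commutes F a b) (h : Swap F (p ++ a :: q) l) :
    ∃ p' q', l = p' ++ a :: q' ∧ (∀ b ∈ p', Commutes F a b) ∧
      TraceEqv F (p ++ q) (p' ++ q') := by
  generalize hl : p ++ a :: q = l₀ at h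
  obtain ⟨P, Q, c, d, hcd⟩ := h
  rcases List.append_eq_append_iff.1 hl with ⟨r, rfl, hr⟩ | ⟨r, rfl, hr⟩
  · rcases r with _ | ⟨_, r⟩
    · simp only [List.nil_append, List.cons.injEq] at hr
      obtain ⟨rfl, rfl⟩ := hr
      exact ⟨p ++ [d], Q, by simp, List.forall_mem_append.2 ⟨hp, List.forall_mem_singleton.2 hcd⟩,
        by simpa using TraceEqv.refl _⟩
    · simp only [List.cons_append, List.cons.injEq] at hr
      obtain ⟨rfl, rfl⟩ := hr
      exact ⟨p, r ++ d :: c :: Q, by simp, hp, by simpa using TraceEqv.swap (p ++ r) Q hcd⟩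
  · rcases r with _ | ⟨_, _ | ⟨_, r⟩⟩
    · simp only [List.nil_append, List.cons.injEq] at hr
      obtain ⟨rfl, rfl⟩ := hr
      exact ⟨P ++ [d], Q, by simp, List.forall_mem_append.2 ⟨by simpa using hp,
        List.forall_mem_singleton.2 hcd⟩, by simpa using TraceEqv.refl _⟩
    · simp only [List.cons_append, List.nil_append, List.cons.injEq] at hr
      obtain ⟨rfl, rfl, rfl⟩ := hr
      exact ⟨P, c :: Q, by simp, fun b hb => hp b (by simp [hb]), by simpa using TraceEqv.refl _⟩
    · simp only [List.cons_append, List.cons.injEq] at hr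
      obtain ⟨rfl, rfl, rfl⟩ := hr
      refine ⟨P ++ d :: c :: r, q, by simp, fun b hb => hp b (by simp at hb ⊢; tauto), ?_⟩
      simpa using TraceEqv.swap P (r ++ q) hcd

lemma TraceEqv.exists_of_cons {a : Letter k} {m l : Word k} (h : TraceEqv F (a :: m) l) :
    ∃ p q, l = p ++ a :: q ∧ (∀ b ∈ p, Commutes F a b) ∧ TraceEqv F m (p ++ q) := by
  induction h with
  | refl => exact ⟨[], m, rfl, by simp, TraceEqv.refl m⟩
  | tail _ hs ih =>
    obtain ⟨p, q, rfl, hp, hm⟩ := ih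
    obtain ⟨p', q', rfl, hp', hpq⟩ := hs.exists_append_cons hp
    exact ⟨p', q', rfl, hp', hm.trans hpq⟩

lemma TraceEqv.of_cons {a : Letter k} {m m' : Word k} (h : TraceEqv F (a :: m) (a :: m')) :
    TraceEqv F m m' := by
  obtain ⟨_ | ⟨c, p⟩, q, hq, hp, hm⟩ := h.exists_of_cons
  · obtain rfl : m' = q := (List.cons.inj hq).2
    exact hm
  · obtain rfl : a = c := (List.cons.inj hq).1
    exact absurd rfl (hp a List.mem_cons_self).1

def StartsWith (F : Set (Sym2 (Fin k))) (a : Letter k) (l : Word k) : Prop :=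
  ∃ m, TraceEqv F (a :: m) l

namespace StartsWith

variable {a b : Letter k} {l l' : Word k}

lemma of_traceEqv (h : StartsWith F a l) (h' : TraceEqv F l l') : StartsWith F a l' :=
  let ⟨m, hm⟩ := h; ⟨m, hm.trans h'⟩

lemma cons (h : StartsWith F a l) (hab : Commutes F a b) : StartsWith F a (b :: l) :=
  let ⟨m, hm⟩ := h; ⟨b :: m, (TraceEqv.swap_cons hab m).trans (hm.cons b)⟩

lemma commutes_and_of_cons (h : StartsWith F a (b :: l)) (hab : a ≠ b) :
    Commutes F a b ∧ StartsWith F a l := by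
  obtain ⟨m, hm⟩ := h
  obtain ⟨_ | ⟨c, p⟩, q, hq, hp, -⟩ := hm.exists_of_cons
  · exact absurd (List.cons.inj hq).1 hab.symm
  · obtain ⟨rfl, rfl⟩ := List.cons.inj hq
    exact ⟨hp b List.mem_cons_self, p ++ q,
      (TraceEqv.append_cons_of_forall_commutes (fun c hc => hp c (by simp [hc])) q).symm⟩

lemma exists_cons_cons (ha : StartsWith F a l) (hb : StartsWith F b l) (hab : a ≠ b) :
    ∃ w, TraceEqv F (a :: b :: w) l := by
  obtain ⟨m, hm⟩ := hb
  obtain ⟨hc, w, hw⟩ := (ha.of_traceEqv hm.symm).commutes_and_of_cons hab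
  exact ⟨w, (TraceEqv.swap_cons hc w).trans ((hw.cons b).trans hm)⟩

end StartsWith

-- Defined letter by letter so that the action `actWord` below preserves reducedness by
-- construction; only the invariance under swaps needs an argument.
def IsReduced (F : Set (Sym2 (Fin k))) : Word k → Prop
  | [] => True
  | a :: l => IsReduced F l ∧ ¬ StartsWith F a.inv l

lemma IsReduced.of_swap {l l' : Word k} (h : Swap F l l') (hl : IsReduced F l) :
    IsReduced F l' := by
  obtain ⟨p, q, a, b, hab⟩ := h
  induction p with
  | nil =>
    obtain ⟨⟨hq, hb⟩, ha⟩ := hl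
    refine ⟨⟨hq, fun ha' => ha (ha'.cons hab.inv_left)⟩, fun hb' => hb ?_⟩
    exact (hb'.commutes_and_of_cons (hab.symm.inv_left.ne)).2
  | cons c p ih =>
    exact ⟨ih hl.1, fun hc => hl.2 (hc.of_traceEqv (TraceEqv.swap p q hab.symm))⟩

lemma IsReduced.of_traceEqv {l l' : Word k} (hl : IsReduced F l) (h : TraceEqv F l l') :
    IsReduced F l' := by
  induction h with
  | refl => exact hl
  | tail _ hs ih => exact ih.of_swap hs

variable (F) in
open Classical in
noncomputable def actWord (a : Letter k) (l : Word k) : Word k :=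
  if h : StartsWith F a.inv l then h.choose else a :: l

section actWord

variable {a b : Letter k} {l l' m : Word k}

lemma actWord_traceEqv_of_traceEqv (h : TraceEqv F (a.inv :: m) l) :
    TraceEqv F (actWord F a l) m := by
  have hs : StartsWith F a.inv l := ⟨m, h⟩
  rw [actWord, dif_pos hs]
  exact (hs.choose_spec.trans h.symm).of_cons

lemma actWord_inv_cons (a : Letter k) (l : Word k) : TraceEqv F (actWord F a (a.inv :: l)) l :=
  actWord_traceEqv_of_traceEqv (.refl _)

lemma actWord_of_not_startsWith (h : ¬ StartsWith F a.inv l) : actWord F a l = a :: l :=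
  dif_neg h

lemma actWord_congr (h : TraceEqv F l l') : TraceEqv F (actWord F a l) (actWord F a l') := by
  by_cases hs : StartsWith F a.inv l
  · obtain ⟨m, hm⟩ := hs
    exact (actWord_traceEqv_of_traceEqv hm).trans (actWord_traceEqv_of_traceEqv (hm.trans h)).symm
  · rw [actWord_of_not_startsWith hs,
      actWord_of_not_startsWith fun hs' => hs (hs'.of_traceEqv h.symm)]
    exact h.cons a

lemma length_actWord_of_startsWith (hs : StartsWith F a.inv l) :
    (actWord F a l).length + 1 = l.length := by
  obtain ⟨m, hm⟩ := hs
  rw [(actWord_traceEqv_of_traceEqv hm).length_eq, ← hm.length_eq, List.length_cons]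

lemma length_actWord (a : Letter k) (l : Word k) :
    (actWord F a l).length = l.length + 1 ∨ (actWord F a l).length + 1 = l.length := by
  by_cases hs : StartsWith F a.inv l
  · exact .inr (length_actWord_of_startsWith hs)
  · simp [actWord_of_not_startsWith hs]

lemma IsReduced.actWord (hl : IsReduced F l) : IsReduced F (actWord F a l) := by
  by_cases hs : StartsWith F a.inv l
  · obtain ⟨m, hm⟩ := hs
    exact (hl.of_traceEqv hm.symm).1.of_traceEqv (actWord_traceEqv_of_traceEqv hm).symm
  · rw [actWord_of_not_startsWith hs]
    exact ⟨hl, hs⟩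

lemma actWord_inv_actWord (hl : IsReduced F l) :
    TraceEqv F (actWord F a.inv (actWord F a l)) l := by
  by_cases hs : StartsWith F a.inv l
  · obtain ⟨m, hm⟩ := hs
    have ham : TraceEqv F (actWord F a l) m := actWord_traceEqv_of_traceEqv hm
    have hm' : ¬ StartsWith F a.inv.inv (actWord F a l) := fun h' =>
      (hl.of_traceEqv hm.symm).2 (h'.of_traceEqv ham)
    rw [actWord_of_not_startsWith hm']
    exact (ham.cons _).trans hm
  · rw [actWord_of_not_startsWith hs]
    exact actWord_traceEqv_of_traceEqv (by simpa using TraceEqv.refl (a :: l))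

lemma actWord_actWord_of_startsWith_of_not (hab : Commutes F a b)
    (hb : StartsWith F b.inv l) (ha : ¬ StartsWith F a.inv l) :
    TraceEqv F (actWord F a (actWord F b l)) (actWord F b (actWord F a l)) := by
  obtain ⟨m, hm⟩ := hb
  have ham : ¬ StartsWith F a.inv m := fun h' =>
    ha ((h'.cons hab.inv_left.inv_right).of_traceEqv hm)
  have hbam : TraceEqv F (b.inv :: a :: m) (a :: l) :=
    (TraceEqv.swap_cons hab.symm.inv_left m).trans (hm.cons a)
  rw [actWord_of_not_startsWith ha]
  refine (actWord_congr (actWord_traceEqv_of_traceEqv hm)).trans ?_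
  rw [actWord_of_not_startsWith ham]
  exact (actWord_traceEqv_of_traceEqv hbam).symm

lemma actWord_comm (hab : Commutes F a b) (l : Word k) :
    TraceEqv F (actWord F a (actWord F b l)) (actWord F b (actWord F a l)) := by
  by_cases ha : StartsWith F a.inv l <;> by_cases hb : StartsWith F b.inv l
  · obtain ⟨w, hw⟩ := ha.exists_cons_cons hb hab.inv_left.inv_right.ne
    have hw' := (TraceEqv.swap_cons hab.symm.inv_left.inv_right w).trans hw
    have hab_w : TraceEqv F (actWord F a (actWord F b l)) w :=
      (actWord_congr (actWord_traceEqv_of_traceEqv hw')).trans (actWord_inv_cons a w)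
    have hba_w : TraceEqv F (actWord F b (actWord F a l)) w :=
      (actWord_congr (actWord_traceEqv_of_traceEqv hw)).trans (actWord_inv_cons b w)
    exact hab_w.trans hba_w.symm
  · exact (actWord_actWord_of_startsWith_of_not hab.symm ha hb).symm
  · exact actWord_actWord_of_startsWith_of_not hab hb ha
  · have hab' : ¬ StartsWith F a.inv (b :: l) := fun h' =>
      ha (h'.commutes_and_of_cons hab.inv_left.ne).2
    have hba' : ¬ StartsWith F b.inv (a :: l) := fun h' =>
      hb (h'.commutes_and_of_cons hab.symm.inv_left.ne).2
    rw [actWord_of_not_startsWith hb, actWord_of_not_startsWith ha, actWord_of_not_startsWith hab',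
      actWord_of_not_startsWith hba']
    exact TraceEqv.swap_cons hab l

end actWord

@[simp] lemma wordProd_nil : wordProd k F [] = 1 := rfl

@[simp] lemma wordProd_cons (a : Letter k) (l : Word k) :
    wordProd k F (a :: l) = sym k F a * wordProd k F l := by
  simp [wordProd]

@[simp] lemma wordProd_append (l₁ l₂ : Word k) :
    wordProd k F (l₁ ++ l₂) = wordProd k F l₁ * wordProd k F l₂ := by
  simp [wordProd]

@[simp] lemma sym_inv (a : Letter k) : sym k F a.inv = (sym k F a)⁻¹ := by
  obtain ⟨i, _ | _⟩ := a <;> simp [sym, Letter.inv]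

lemma Letter.Commutes.commute_sym {a b : Letter k} (h : Commutes F a b) :
    Commute (sym k F a) (sym k F b) := by
  have hgen : Commute (gen k F a.1) (gen k F b.1) := by
    have hrel : gen k F a.1 * gen k F b.1 * (gen k F a.1)⁻¹ * (gen k F b.1)⁻¹ = 1 :=
      (QuotientGroup.eq_one_iff _).2 (Subgroup.subset_normalClosure ⟨a.1, b.1, h.1, h.2, rfl⟩)
    rw [mul_inv_eq_one, mul_inv_eq_iff_eq_mul] at hrel
    exact hrel
  obtain ⟨i, _ | _⟩ := a <;> obtain ⟨j, _ | _⟩ := b <;> simp only [sym] <;> simp [hgen]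

lemma wordProd_eq_of_traceEqv {l l' : Word k} (h : TraceEqv F l l') :
    wordProd k F l = wordProd k F l' := by
  induction h with
  | refl => rfl
  | tail _ hs ih =>
    obtain ⟨p, q, a, b, hab⟩ := hs
    simp only [ih, wordProd_append, wordProd_cons, ← mul_assoc, hab.commute_sym.eq]

lemma wordProd_actWord (a : Letter k) (l : Word k) :
    wordProd k F (actWord F a l) = sym k F a * wordProd k F l := by
  by_cases hs : StartsWith F a.inv l
  · obtain ⟨m, hm⟩ := hs
    rw [wordProd_eq_of_traceEqv (actWord_traceEqv_of_traceEqv hm), ← wordProd_eq_of_traceEqv hm,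
      wordProd_cons, sym_inv, mul_inv_cancel_left]
  · rw [actWord_of_not_startsWith hs, wordProd_cons]

variable (F) in
def traceSetoid : Setoid (Word k) :=
  ⟨TraceEqv F, ⟨TraceEqv.refl, TraceEqv.symm, TraceEqv.trans⟩⟩

variable (F) in
abbrev Trace := Quotient (traceSetoid F)

namespace Trace

def length : Trace F → ℕ :=
  Quotient.lift List.length fun _ _ => TraceEqv.length_eq

def value : Trace F → Grp k F :=
  Quotient.lift (wordProd k F) fun _ _ => wordProd_eq_of_traceEqv

noncomputable def act (a : Letter k) : Trace F → Trace F :=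
  Quotient.map (actWord F a) fun _ _ => actWord_congr

lemma length_act (a : Letter k) (c : Trace F) :
    (c.act a).length = c.length + 1 ∨ (c.act a).length + 1 = c.length :=
  Quotient.inductionOn c (length_actWord a)

lemma value_act (a : Letter k) (c : Trace F) : (c.act a).value = sym k F a * c.value :=
  Quotient.inductionOn c (wordProd_actWord a)

end Trace

variable (F) in
def ReducedTrace := {c : Trace F // ∃ l, IsReduced F l ∧ ⟦l⟧ = c}

namespace ReducedTrace

def empty : ReducedTrace F := ⟨⟦[]⟧, [], trivial, rfl⟩

noncomputable def act (a : Letter k) (c : ReducedTrace F) : ReducedTrace F :=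
  ⟨c.1.act a, by obtain ⟨l, hl, hc⟩ := c.2; exact ⟨actWord F a l, hl.actWord, by rw [← hc]; rfl⟩⟩

@[simp] lemma val_act (a : Letter k) (c : ReducedTrace F) : (c.act a).1 = c.1.act a := rfl

lemma act_inv_act (a : Letter k) (c : ReducedTrace F) : (c.act a).act a.inv = c := by
  obtain ⟨_, l, hl, rfl⟩ := c
  exact Subtype.ext (Quotient.sound (actWord_inv_actWord hl))

lemma act_comm {a b : Letter k} (hab : Commutes F a b) (c : ReducedTrace F) :
    (c.act b).act a = (c.act a).act b := by
  obtain ⟨_, l, -, rfl⟩ := c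
  exact Subtype.ext (Quotient.sound (actWord_comm hab l))

noncomputable def actPerm (a : Letter k) : Equiv.Perm (ReducedTrace F) where
  toFun := act a
  invFun := act a.inv
  left_inv := act_inv_act a
  right_inv c := by simpa using act_inv_act a.inv c

lemma actPerm_commute {i j : Fin k} (hij : i ≠ j) (hF : s(i, j) ∉ F) :
    Commute (actPerm (F := F) (i, true)) (actPerm (F := F) (j, true)) :=
  Equiv.ext (act_comm ⟨hij, hF⟩)

end ReducedTrace

open ReducedTrace in
variable (F) in
noncomputable def toPerm : Grp k F →* Equiv.Perm (ReducedTrace F) :=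
  PresentedGroup.toGroup (f := fun i => actPerm (i, true)) <| by
    rintro _ ⟨i, j, hij, hF, rfl⟩
    simp only [map_mul, map_inv, FreeGroup.lift_apply_of]
    rw [(actPerm_commute hij hF).eq]
    group

lemma toPerm_sym (a : Letter k) (c : ReducedTrace F) : toPerm F (sym k F a) c = c.act a := by
  obtain ⟨i, _ | _⟩ := a <;> simp [sym, gen, toPerm] <;> rfl

noncomputable def normalForm (x : Grp k F) : ReducedTrace F := toPerm F x .empty

lemma normalForm_one : normalForm (1 : Grp k F) = .empty := by
  simp [normalForm]

lemma normalForm_sym_mul (a : Letter k) (x : Grp k F) :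
    normalForm (sym k F a * x) = (normalForm x).act a := by
  rw [normalForm, map_mul, Equiv.Perm.mul_apply, toPerm_sym, normalForm]

lemma exists_wordProd_eq (x : Grp k F) : ∃ l, wordProd k F l = x := by
  obtain ⟨w, rfl⟩ := QuotientGroup.mk'_surjective (Subgroup.normalClosure (Rels k F)) x
  induction w using FreeGroup.induction_on with
  | C1 => exact ⟨[], rfl⟩
  | of i => exact ⟨[(i, true)], by simp [wordProd, sym, gen]; rfl⟩
  | inv_of i _ => exact ⟨[(i, false)], by simp [wordProd, sym, gen]; rfl⟩
  | mul y z hy hz =>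
    obtain ⟨ly, hy⟩ := hy
    obtain ⟨lz, hz⟩ := hz
    exact ⟨ly ++ lz, by rw [wordProd_append, hy, hz]; rfl⟩

lemma len_le_length {x : Grp k F} {l : Word k} (h : wordProd k F l = x) : len x ≤ l.length :=
  Nat.sInf_le ⟨l, h, rfl⟩

lemma exists_minWord (x : Grp k F) : ∃ l, MinWord x l := by
  obtain ⟨l, hl⟩ := exists_wordProd_eq x
  exact Nat.sInf_mem
    (⟨l.length, l, hl, rfl⟩ : {n | ∃ l : Word k, wordProd k F l = x ∧ l.length = n}.Nonempty)

lemma value_normalForm (x : Grp k F) : (normalForm x).1.value = x := by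
  obtain ⟨l, rfl⟩ := exists_wordProd_eq x
  induction l with
  | nil => rw [wordProd_nil, normalForm_one]; rfl
  | cons a l ih => rw [wordProd_cons, normalForm_sym_mul, ReducedTrace.val_act, Trace.value_act, ih]

lemma length_normalForm_wordProd_le (l : Word k) :
    (normalForm (wordProd k F l)).1.length ≤ l.length := by
  induction l with
  | nil => rw [wordProd_nil, normalForm_one]; rfl
  | cons a l ih =>
    rw [wordProd_cons, normalForm_sym_mul, ReducedTrace.val_act]
    have := Trace.length_act a (normalForm (wordProd k F l)).1
    simp only [List.length_cons]
    omega

lemma normalForm_wordProd_of_length_eq {l : Word k}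
    (h : (normalForm (wordProd k F l)).1.length = l.length) :
    (normalForm (wordProd k F l)).1 = ⟦l⟧ := by
  induction l with
  | nil => rw [wordProd_nil, normalForm_one]; rfl
  | cons a l ih =>
    rw [wordProd_cons, normalForm_sym_mul, ReducedTrace.val_act] at h ⊢
    have hle := length_normalForm_wordProd_le (F := F) l
    have hact := Trace.length_act a (normalForm (wordProd k F l)).1
    have hl : (normalForm (wordProd k F l)).1 = ⟦l⟧ :=
      ih (by simp only [List.length_cons] at h; omega)
    rw [hl] at h ⊢
    have hs : ¬ StartsWith F a.inv l := fun hs => by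
      have := length_actWord_of_startsWith hs
      change (actWord F a l).length = l.length + 1 at h
      omega
    exact congrArg _ (actWord_of_not_startsWith hs)

lemma len_eq_length_normalForm (x : Grp k F) : len x = (normalForm x).1.length := by
  apply le_antisymm
  · obtain ⟨l, hl⟩ := Quotient.exists_rep (normalForm x).1
    have hx : wordProd k F l = x := by rw [← value_normalForm x, ← hl]; rfl
    exact (len_le_length hx).trans_eq (by rw [← hl]; rfl)
  · obtain ⟨l, rfl, hl⟩ := exists_minWord x
    exact hl ▸ length_normalForm_wordProd_le l

lemma MinWord.traceEqv {x : Grp k F} {l l' : Word k} (h : MinWord x l) (h' : MinWord x l') :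
    TraceEqv F l l' := by
  have hnf : ∀ {l}, MinWord x l → (normalForm x).1 = ⟦l⟧ := fun ⟨hl, hlen⟩ => by
    subst hl
    exact normalForm_wordProd_of_length_eq (by rw [← len_eq_length_normalForm, hlen])
  exact Quotient.exact ((hnf h).symm.trans (hnf h'))

lemma wordProd_reverse_map_inv (l : Word k) :
    wordProd k F (l.map Letter.inv).reverse = (wordProd k F l)⁻¹ := by
  induction l with
  | nil => simp
  | cons a l ih => simp [ih]

lemma len_one : len (1 : Grp k F) = 0 :=
  Nat.le_zero.1 (len_le_length (l := []) rfl)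

lemma len_mul_le (x y : Grp k F) : len (x * y) ≤ len x + len y := by
  obtain ⟨lx, rfl, hx⟩ := exists_minWord x
  obtain ⟨ly, rfl, hy⟩ := exists_minWord y
  simpa [hx, hy] using len_le_length (wordProd_append (F := F) lx ly)

lemma len_inv (x : Grp k F) : len x⁻¹ = len x := by
  have len_inv_le : ∀ y : Grp k F, len y⁻¹ ≤ len y := fun y => by
    obtain ⟨l, rfl, hl⟩ := exists_minWord y
    simpa [hl] using len_le_length (wordProd_reverse_map_inv (F := F) l)
  exact le_antisymm (len_inv_le x) (by simpa using len_inv_le x⁻¹)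

lemma len_sym_mul (a : Letter k) (y : Grp k F) :
    len (sym k F a * y) = len y + 1 ∨ len (sym k F a * y) + 1 = len y := by
  simp only [len_eq_length_normalForm, normalForm_sym_mul, ReducedTrace.val_act]
  exact Trace.length_act a _

lemma len_sym (a : Letter k) : len (sym k F a) = 1 := by
  have := len_sym_mul (F := F) a 1
  rw [mul_one, len_one] at this
  omega

lemma exists_eq_inv_sym_mul_inv_sym_mul {a b : Letter k} {y : Grp k F} (hab : a ≠ b)
    (ha : len (sym k F a * y) < len y) (hb : len (sym k F b * y) < len y) :
    ∃ v, y = (sym k F a)⁻¹ * (sym k F b)⁻¹ * v ∧ len v + 2 ≤ len y := by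
  have minWord_cons : ∀ {c : Letter k} {l}, MinWord (sym k F c * y) l →
      len (sym k F c * y) < len y → MinWord y (c.inv :: l) := fun {c _} ⟨hl, hlen⟩ hlt => by
    refine ⟨by simp [hl], ?_⟩
    have := len_sym_mul c y
    rw [List.length_cons, hlen]
    omega
  obtain ⟨la, hla⟩ := exists_minWord (sym k F a * y)
  obtain ⟨lb, hlb⟩ := exists_minWord (sym k F b * y)
  have hy := minWord_cons hlb hb
  have hab' : a.inv ≠ b.inv := fun h => hab (by simpa using congrArg Letter.inv h)
  obtain ⟨w, hw⟩ := StartsWith.exists_cons_cons ⟨la, (minWord_cons hla ha).traceEqv hy⟩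
    ⟨lb, .refl _⟩ hab'
  refine ⟨wordProd k F w, ?_, ?_⟩
  · rw [← hy.1, ← wordProd_eq_of_traceEqv hw]
    simp [mul_assoc]
  · have := len_le_length (F := F) (l := w) rfl
    have := hw.length_eq
    rw [hy.2] at this
    simp only [List.length_cons] at this
    omega

protected lemma le.refl (x : Grp k F) : le x x := by
  simp [le, len_one]

lemma le.trans {x y z : Grp k F} (hxy : le x y) (hyz : le y z) : le x z := by
  have h₁ : len (x⁻¹ * z) ≤ len (x⁻¹ * y) + len (y⁻¹ * z) := by
    simpa [mul_assoc] using len_mul_le (x⁻¹ * y) (y⁻¹ * z)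
  have h₂ : len z ≤ len x + len (x⁻¹ * z) := by
    simpa using len_mul_le x (x⁻¹ * z)
  unfold le at *
  omega

lemma maxSym_iff {α : Letter k} {x : Grp k F} :
    MaxSym α x ↔ len x = len (x * (sym k F α)⁻¹) + 1 := by
  rw [MaxSym, le, mul_inv_rev, inv_inv, inv_mul_cancel_right, len_sym]

lemma exists_maxSym {x : Grp k F} (hx : x ≠ 1) : ∃ α, MaxSym α x := by
  obtain ⟨l, rfl, hl⟩ := exists_minWord x
  rcases l.eq_nil_or_concat with rfl | ⟨L, α, rfl⟩
  · exact absurd rfl hx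
  rw [List.concat_eq_append] at hl ⊢
  have hL : wordProd k F (L ++ [α]) * (sym k F α)⁻¹ = wordProd k F L := by simp
  refine ⟨α, maxSym_iff.2 (le_antisymm ?_ ?_)⟩
  · simpa [hL, len_sym] using len_mul_le (wordProd k F L) (sym k F α)
  · rw [hL, ← hl, List.length_append, List.length_singleton]
    exact Nat.add_le_add_right (len_le_length rfl) 1

lemma le_of_maxSym_of_maxSym {α β : Letter k} {x w : Grp k F} (hαβ : α ≠ β)
    (hα : MaxSym α x) (hβ : MaxSym β x)
    (hαw : le (x * (sym k F α)⁻¹) w) (hβw : le (x * (sym k F β)⁻¹) w) : le x w := by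
  have hx : ∀ {γ : Letter k}, MaxSym γ x → len (sym k F γ * x⁻¹) + 1 = len x⁻¹ := fun {γ} hγ => by
    rw [← inv_inv (sym k F γ), ← mul_inv_rev, len_inv, len_inv, maxSym_iff.1 hγ]
  have hw : ∀ {γ : Letter k}, MaxSym γ x → le (x * (sym k F γ)⁻¹) w →
      len w + 1 = len x + len (sym k F γ * (x⁻¹ * w)) := fun {γ} hγ hγw => by
    rw [le, mul_inv_rev, inv_inv, mul_assoc] at hγw
    rw [hγw, maxSym_iff.1 hγ]
    omega
  have hαy := hw hα hαw
  have hβy := hw hβ hβw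
  rw [le]
  rcases len_sym_mul α (x⁻¹ * w) with h | hαy'
  · omega
  rcases len_sym_mul β (x⁻¹ * w) with h | hβy'
  · omega
  -- `x = u⁻¹βα` and `x⁻¹w = α⁻¹β⁻¹v`, so `w = u⁻¹v` would be too short.
  obtain ⟨u, hu, hul⟩ := exists_eq_inv_sym_mul_inv_sym_mul hαβ (y := x⁻¹) (by have := hx hα; omega)
    (by have := hx hβ; omega)
  obtain ⟨v, hv, hvl⟩ := exists_eq_inv_sym_mul_inv_sym_mul hαβ (y := x⁻¹ * w) (by omega)
    (by omega)
  have hwuv : w = u⁻¹ * v := by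
    rw [← mul_inv_cancel_left x w, hv, ← inv_inv x, hu]
    group
  have := len_mul_le u⁻¹ v
  rw [← hwuv, len_inv] at this
  rw [len_inv] at hul
  omega

lemma le_of_forall_isPeak_le {x w : Grp k F} (h : ∀ p, IsPeak p → le p x → le p w) :
    le x w := by
  induction hn : len x using Nat.strong_induction_on generalizing x with
  | _ n ih =>
  by_cases hx : x = 1
  · subst hx
    simp [le, len_one]
  obtain ⟨α, hα⟩ := exists_maxSym hx
  by_cases hpeak : ∀ β, MaxSym β x → β = α
  · exact h x ⟨α, hα, hpeak⟩ (le.refl x)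
  push Not at hpeak
  obtain ⟨β, hβ, hβα⟩ := hpeak
  have hbelow : ∀ {γ}, MaxSym γ x → le (x * (sym k F γ)⁻¹) w := fun hγ =>
    ih _ (by have := maxSym_iff.1 hγ; omega) (fun p hp hpx => h p hp (hpx.trans hγ)) rfl
  exact le_of_maxSym_of_maxSym hβα.symm hα hβ (hbelow hα) (hbelow hβ)

end

theorem stmt12_general {k : ℕ} {F : Set (Sym2 (Fin k))} (x : Grp k F) :
    IsJoinSet {p : Grp k F | IsPeak p ∧ le p x} x :=
  ⟨fun _ hp => hp.2, fun _ hw => le_of_forall_isPeak_le fun p hp hpx => hw p ⟨hp, hpx⟩⟩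

/-- every `x` is the join of all peaks `p ≤ x`. -/
theorem stmt12 {k : ℕ} (hk : 1 ≤ k) {F : Set (Sym2 (Fin k))} (x : Grp k F) :
    IsJoinSet {p : Grp k F | IsPeak p ∧ le p x} x :=
  stmt12_general x

end GraphGroupPaper
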